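/- arXiv:2310.15375 — 2 statements merged into one kernel-verified Lean document; each statement's English description precedes it below -/
import Mathlib

section
/- Let n ≥ 1 and M ∈ ℂ^{n×n}. Define the circulant matrix C_M ∈ ℂ^{n×n} by (C_M)_{ij} = c_{(i−j) mod n}, where c_k = (1/n) Σ_{(i,j) : (i−j) mod n = k} M_{ij} is the mean of the entries of M on the k-th circulant diagonal. Then for every circulant matrix C ∈ ℂ^{n×n}, ‖C_M − M‖_F ≤ ‖C − M‖_F; that is, C_M is the Frobenius-optimal circulant approximation of M. -/
open Finset Matrix

/-- Frobenius norm of a complex matrix. -/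
noncomputable def frobNorm {n : ℕ} (A : Matrix (Fin n) (Fin n) ℂ) : ℝ :=
  Real.sqrt (∑ i, ∑ j, ‖A i j‖ ^ 2)

/-! The circulant diagonals partition the index square into pieces of equal size, and on each of
them a circulant matrix is a single constant `z`. So `‖C - M‖_F²` is a sum over diagonals of
`∑ ‖z - M i j‖²`, and each summand is minimised by the mean of `M` on that diagonal, because
the cross term of `‖(z - μ) + (μ - M i j)‖²` sums to zero when `μ` is the mean. -/

theorem sum_norm_sub_sq_le_of_sum_sub_eq_zero {α E : Type*} [NormedAddCommGroup E]
    [InnerProductSpace ℝ E] (s : Finset α) (g : α → E) {μ : E}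
    (hμ : ∑ a ∈ s, (μ - g a) = 0) (z : E) :
    ∑ a ∈ s, ‖μ - g a‖ ^ 2 ≤ ∑ a ∈ s, ‖z - g a‖ ^ 2 := by
  have expand : ∀ a ∈ s, ‖z - g a‖ ^ 2 =
      ‖z - μ‖ ^ 2 + 2 * inner ℝ (z - μ) (μ - g a) + ‖μ - g a‖ ^ 2 := fun a _ => by
    rw [← norm_add_sq_real, sub_add_sub_cancel]
  have cross : ∑ a ∈ s, inner ℝ (z - μ) (μ - g a) = 0 := by
    rw [← inner_sum, hμ, inner_zero_right]
  rw [sum_congr rfl expand, sum_add_distrib, sum_add_distrib, ← mul_sum, cross, mul_zero,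
    add_zero, le_add_iff_nonneg_left]
  positivity

section CirculantDiag

variable {G : Type*} [Fintype G] [DecidableEq G]

def circulantDiag [Sub G] (k : G) : Finset (G × G) :=
  univ.filter fun p => p.1 - p.2 = k

theorem card_circulantDiag [AddGroup G] (k : G) : #(circulantDiag k) = Fintype.card G := by
  refine card_nbij' Prod.snd (fun j => (k + j, j)) (by simp) (by simp [circulantDiag]) ?_
    (fun _ _ => rfl)
  intro p hp
  simp only [circulantDiag, coe_filter, mem_univ, true_and, Set.mem_ofPred_eq] at hp
  simp [← hp]

theorem sum_sum_eq_sum_circulantDiag [Sub G] {β : Type*} [AddCommMonoid β] (f : G → G → β) :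
    ∑ i, ∑ j, f i j = ∑ k, ∑ p ∈ circulantDiag k, f p.1 p.2 := by
  simp only [circulantDiag]
  rw [sum_fiberwise, Fintype.sum_prod_type']

theorem sum_circulantDiag_norm_sub_sq_le [AddGroup G] {E : Type*} [NormedAddCommGroup E]
    [InnerProductSpace ℝ E] (M : G → G → E) (k : G) {μ : E}
    (hμ : Fintype.card G • μ = ∑ p ∈ circulantDiag k, M p.1 p.2) (z : E) :
    ∑ p ∈ circulantDiag k, ‖μ - M p.1 p.2‖ ^ 2 ≤ ∑ p ∈ circulantDiag k, ‖z - M p.1 p.2‖ ^ 2 :=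
  sum_norm_sub_sq_le_of_sum_sub_eq_zero _ _
    (by rw [sum_sub_distrib, sum_const, card_circulantDiag, hμ, sub_self]) z

end CirculantDiag

theorem circulant_means_optimal_general (n : ℕ)
    (M : Matrix (Fin n) (Fin n) ℂ)
    (c : Fin n → ℂ)
    (hc : ∀ k : Fin n, c k =
      (1 / (n : ℂ)) *
        ∑ p ∈ Finset.univ.filter (fun p : Fin n × Fin n => p.1 - p.2 = k), M p.1 p.2)
    (CM : Matrix (Fin n) (Fin n) ℂ) (hCM : ∀ i j, CM i j = c (i - j))
    (C : Matrix (Fin n) (Fin n) ℂ)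
    (hC : ∀ i j i' j' : Fin n, i - j = i' - j' → C i j = C i' j') :
    frobNorm (CM - M) ≤ frobNorm (C - M) := by
  refine Real.sqrt_le_sqrt ?_
  simp only [sum_sum_eq_sum_circulantDiag fun i j => ‖(CM - M) i j‖ ^ 2,
    sum_sum_eq_sum_circulantDiag fun i j => ‖(C - M) i j‖ ^ 2]
  refine sum_le_sum fun k _ => ?_
  -- `Fin n` is an additive group only under `NeZero n`, which the index `k` provides.
  have : NeZero n := ⟨(Fin.pos k).ne'⟩
  have hn : (n : ℂ) ≠ 0 := Nat.cast_ne_zero.mpr (NeZero.ne n)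
  have hmean : Fintype.card (Fin n) • c k = ∑ p ∈ circulantDiag k, M p.1 p.2 := by
    rw [Fintype.card_fin, nsmul_eq_mul, hc k, one_div, mul_inv_cancel_left₀ hn]
    rfl
  have hCM_diag : ∀ p ∈ circulantDiag k, CM p.1 p.2 = c k := fun p hp => by
    rw [hCM, (mem_filter.mp hp).2]
  have hC_diag : ∀ p ∈ circulantDiag k, C p.1 p.2 = C k 0 := fun p hp =>
    hC _ _ _ _ (by rw [(mem_filter.mp hp).2, sub_zero])
  calc ∑ p ∈ circulantDiag k, ‖(CM - M) p.1 p.2‖ ^ 2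
      = ∑ p ∈ circulantDiag k, ‖c k - M p.1 p.2‖ ^ 2 :=
        sum_congr rfl fun p hp => by rw [Matrix.sub_apply, hCM_diag p hp]
    _ ≤ ∑ p ∈ circulantDiag k, ‖C k 0 - M p.1 p.2‖ ^ 2 :=
        sum_circulantDiag_norm_sub_sq_le M k hmean _
    _ = ∑ p ∈ circulantDiag k, ‖(C - M) p.1 p.2‖ ^ 2 :=
        sum_congr rfl fun p hp => by rw [Matrix.sub_apply, hC_diag p hp]

theorem circulant_means_optimal (n : ℕ) (hn : 1 ≤ n)
    (M : Matrix (Fin n) (Fin n) ℂ)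
    (c : Fin n → ℂ)
    (hc : ∀ k : Fin n, c k =
      (1 / (n : ℂ)) *
        ∑ p ∈ Finset.univ.filter (fun p : Fin n × Fin n => p.1 - p.2 = k), M p.1 p.2)
    (CM : Matrix (Fin n) (Fin n) ℂ) (hCM : ∀ i j, CM i j = c (i - j))
    (C : Matrix (Fin n) (Fin n) ℂ)
    (hC : ∀ i j i' j' : Fin n, i - j = i' - j' → C i j = C i' j') :
    frobNorm (CM - M) ≤ frobNorm (C - M) :=
  circulant_means_optimal_general n M c hc CM hCM C hC
end

section
/- Let n ≥ 1, let ω = exp(2πi/n), and let F ∈ ℂ^{n×n} be the unitary DFT matrix with entries F_{jk} = ω^{jk}/√n. For M ∈ ℂ^{n×n}, let D be the diagonal matrix whose diagonal equals the diagonal of F M Fᴴ, and set C_D = Fᴴ D F. Then C_D is circulant, its eigenvalues are exactly the diagonal entries of F M Fᴴ (each diagonal entry d_{jj} satisfies C_D x_j = d_{jj} x_j where x_j is the j-th column of Fᴴ), and for every circulant matrix C ∈ ℂ^{n×n}, ‖C_D − M‖_F ≤ ‖C − M‖_F. -/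
/-!
For a primitive `n`-th root of unity `ω` the rows of `F` are orthonormal (geometric sums of powers
of `ω^(i-j)`), so `F` is unitary and `Fᴴ` is the DFT matrix of `ω⁻¹`. Substituting `l ↦ i - l` in
`(C Fᴴ)ᵢⱼ = ∑ₗ c(i - l) ω^(-lj)/√n` shows `C Fᴴ = Fᴴ Λ` with `Λ` diagonal for every circulant
`C = circulant c`; dually, `(Fᴴ D F)ᵢⱼ` depends only on `i - j`. The Frobenius norm is invariant
under unitary conjugation, so `‖C - M‖_F = ‖Λ - F M Fᴴ‖_F`, and over diagonal `Λ` this is smallest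
for the diagonal part `D` of `F M Fᴴ`, which is `F C_D Fᴴ`.
-/

open Finset Matrix Complex

theorem pow_finVal_add {M : Type*} [Monoid M] {x : M} {n : ℕ} (h : x ^ n = 1) (a b : Fin n) :
    x ^ ((a + b : Fin n) : ℕ) = x ^ (a : ℕ) * x ^ (b : ℕ) := by
  rw [Fin.val_add, ← pow_eq_pow_mod _ h, pow_add]

theorem pow_finVal_sub {G₀ : Type*} [GroupWithZero G₀] {x : G₀} {n : ℕ} [NeZero n]
    (h : x ^ n = 1) (a b : Fin n) :
    x ^ ((a - b : Fin n) : ℕ) = x ^ (a : ℕ) / x ^ (b : ℕ) := by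
  have hx : x ≠ 0 := by rintro rfl; simp [zero_pow (NeZero.ne n)] at h
  rw [eq_div_iff (pow_ne_zero _ hx), ← pow_finVal_add h, sub_add_cancel]

theorem IsPrimitiveRoot.sum_pow_mul_inv_pow {K : Type*} [Field K] {ω : K} {n : ℕ}
    (hω : IsPrimitiveRoot ω n) (i j : Fin n) :
    ∑ k : Fin n, ω ^ ((i : ℕ) * k) * ω⁻¹ ^ ((k : ℕ) * j) = if i = j then (n : K) else 0 := by
  have hterm : ∀ k : Fin n, ω ^ ((i : ℕ) * k) * ω⁻¹ ^ ((k : ℕ) * j) =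
      (ω ^ (i : ℕ) / ω ^ (j : ℕ)) ^ (k : ℕ) := fun k => by
    rw [div_eq_mul_inv, mul_pow, ← pow_mul, ← inv_pow, ← pow_mul, mul_comm (j : ℕ)]
  simp_rw [hterm, Fin.sum_univ_eq_sum_range (fun k => (ω ^ (i : ℕ) / ω ^ (j : ℕ)) ^ k)]
  split_ifs with hij
  · simp [hij, div_self (pow_ne_zero _ (hω.ne_zero (Fin.pos i).ne'))]
  · have hωj : ω ^ (j : ℕ) ≠ 0 := pow_ne_zero _ (hω.ne_zero (Fin.pos i).ne')
    have hζ : ω ^ (i : ℕ) / ω ^ (j : ℕ) ≠ 1 := fun h =>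
      hij <| Fin.ext <| hω.pow_inj i.isLt j.isLt <| (div_eq_one_iff_eq hωj).1 h
    rw [geom_sum_eq hζ, div_pow, ← pow_mul, ← pow_mul, mul_comm (i : ℕ), mul_comm (j : ℕ),
      pow_mul, pow_mul, hω.pow_eq_one, one_pow, one_pow, div_one, sub_self, zero_div]

noncomputable def dftMatrix (n : ℕ) (ω : ℂ) : Matrix (Fin n) (Fin n) ℂ :=
  of fun j k => ω ^ ((j : ℕ) * k) / (Real.sqrt n : ℂ)

theorem ofReal_sqrt_mul_ofReal_sqrt_natCast (n : ℕ) :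
    (Real.sqrt n : ℂ) * (Real.sqrt n : ℂ) = n := by
  rw [← ofReal_mul, Real.mul_self_sqrt n.cast_nonneg, ofReal_natCast]

theorem eq_circulant_of_sub_eq {α : Type*} {n : ℕ} [NeZero n] {C : Matrix (Fin n) (Fin n) α}
    (hC : ∀ i j i' j' : Fin n, i - j = i' - j' → C i j = C i' j') :
    C = circulant fun i => C i 0 := by
  ext i j
  exact hC i j (i - j) 0 (sub_zero _).symm

theorem mulVec_col_eq_smul_of_mul_eq_mul_diagonal {m R : Type*} [Fintype m] [DecidableEq m]
    [CommSemiring R] {A V : Matrix m m R} {d : m → R} (h : A * V = V * diagonal d) (j : m) :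
    A *ᵥ (fun l => V l j) = d j • fun l => V l j := by
  funext l
  have hlj := congr_fun (congr_fun h l) j
  rw [mul_diagonal, mul_apply] at hlj
  simpa [mulVec, dotProduct, mul_comm] using hlj

section Dft

variable {n : ℕ} [NeZero n] {ω : ℂ}

theorem conjTranspose_dftMatrix (hω : IsPrimitiveRoot ω n) :
    (dftMatrix n ω)ᴴ = dftMatrix n ω⁻¹ := by
  have hstar : star ω = ω⁻¹ := (inv_eq_conj (hω.norm'_eq_one (NeZero.ne n))).symm
  ext i j
  simp [dftMatrix, hstar, mul_comm (j : ℕ)]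

theorem dftMatrix_mul_dftMatrix_inv (hω : IsPrimitiveRoot ω n) :
    dftMatrix n ω * dftMatrix n ω⁻¹ = 1 := by
  ext i j
  have hn : (n : ℂ) ≠ 0 := Nat.cast_ne_zero.2 (NeZero.ne n)
  simp only [mul_apply, dftMatrix, of_apply, div_mul_div_comm, ← sum_div,
    ofReal_sqrt_mul_ofReal_sqrt_natCast, hω.sum_pow_mul_inv_pow, one_apply]
  split_ifs <;> simp [hn]

theorem dftMatrix_mem_unitaryGroup (hω : IsPrimitiveRoot ω n) :
    dftMatrix n ω ∈ unitaryGroup (Fin n) ℂ := by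
  rw [mem_unitaryGroup_iff, star_eq_conjTranspose, conjTranspose_dftMatrix hω,
    dftMatrix_mul_dftMatrix_inv hω]

theorem circulant_mul_dftMatrix_inv (hω : IsPrimitiveRoot ω n) (c : Fin n → ℂ) :
    circulant c * dftMatrix n ω⁻¹ =
      dftMatrix n ω⁻¹ * diagonal fun j : Fin n => ∑ m, c m * ω ^ ((j : ℕ) * m) := by
  ext i j
  rw [mul_diagonal, mul_apply, ← (Equiv.subLeft i).sum_comp, mul_sum]
  refine sum_congr rfl fun m _ => ?_
  have h : (ω ^ (j : ℕ)) ^ n = 1 := by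
    rw [← pow_mul, mul_comm, pow_mul, hω.pow_eq_one, one_pow]
  simp only [Equiv.subLeft_apply, sub_sub_cancel, circulant_apply, dftMatrix, of_apply]
  rw [mul_comm _ (j : ℕ), mul_comm (i : ℕ), pow_mul, pow_mul, inv_pow, inv_pow,
    pow_finVal_sub h]
  field_simp
  ring

theorem dftMatrix_mul_circulant_mul_conjTranspose (hω : IsPrimitiveRoot ω n) (c : Fin n → ℂ) :
    dftMatrix n ω * circulant c * (dftMatrix n ω)ᴴ =
      diagonal fun j : Fin n => ∑ m, c m * ω ^ ((j : ℕ) * m) := by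
  rw [conjTranspose_dftMatrix hω, Matrix.mul_assoc, circulant_mul_dftMatrix_inv hω,
    ← Matrix.mul_assoc, dftMatrix_mul_dftMatrix_inv hω, Matrix.one_mul]

theorem dftMatrix_inv_mul_diagonal_mul_dftMatrix (hω : IsPrimitiveRoot ω n) (d : Fin n → ℂ) :
    dftMatrix n ω⁻¹ * diagonal d * dftMatrix n ω =
      circulant fun m : Fin n => (∑ k, d k * ω⁻¹ ^ ((k : ℕ) * m)) / n := by
  ext i j
  rw [mul_apply, circulant_apply, sum_div]
  refine sum_congr rfl fun k _ => ?_
  have h : (ω⁻¹ ^ (k : ℕ)) ^ n = 1 := by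
    rw [← pow_mul, mul_comm, pow_mul, hω.inv.pow_eq_one, one_pow]
  simp only [mul_diagonal, dftMatrix, of_apply]
  rw [pow_mul ω⁻¹ (k : ℕ), pow_finVal_sub h, ← ofReal_sqrt_mul_ofReal_sqrt_natCast]
  have hω0 : ω ≠ 0 := hω.ne_zero (NeZero.ne n)
  simp only [inv_pow, ← pow_mul]
  field_simp
  ring

end Dft

theorem sum_norm_sq_eq_trace {m p : Type*} [Fintype m] [Fintype p] (A : Matrix m p ℂ) :
    ((∑ i, ∑ j, ‖A i j‖ ^ 2 : ℝ) : ℂ) = trace (Aᴴ * A) := by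
  rw [trace, sum_comm]
  push_cast
  refine sum_congr rfl fun j _ => ?_
  rw [Matrix.diag, mul_apply]
  refine sum_congr rfl fun i _ => ?_
  rw [conjTranspose_apply, mul_comm, RCLike.star_def, mul_conj, normSq_eq_norm_sq]
  push_cast; rfl

section Frobenius

variable {n : ℕ}

theorem frobNorm_le_of_norm_le {A B : Matrix (Fin n) (Fin n) ℂ}
    (h : ∀ i j, ‖A i j‖ ≤ ‖B i j‖) :
    frobNorm A ≤ frobNorm B :=
  Real.sqrt_le_sqrt <| sum_le_sum fun i _ => sum_le_sum fun j _ =>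
    pow_le_pow_left₀ (norm_nonneg _) (h i j) 2

theorem frobNorm_diagonal_diag_sub_le (A : Matrix (Fin n) (Fin n) ℂ) (e : Fin n → ℂ) :
    frobNorm (diagonal A.diag - A) ≤ frobNorm (diagonal e - A) :=
  frobNorm_le_of_norm_le fun i j => by
    by_cases h : i = j
    · subst h; simp
    · simp [diagonal_apply_ne _ h]

theorem frobNorm_mul_mul_conjTranspose {U : Matrix (Fin n) (Fin n) ℂ} (hU : U ∈ unitaryGroup (Fin n) ℂ)
    (A : Matrix (Fin n) (Fin n) ℂ) : frobNorm (U * A * Uᴴ) = frobNorm A := by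
  have hUU : Uᴴ * U = 1 := mem_unitaryGroup_iff'.1 hU
  have htrace : trace ((U * A * Uᴴ)ᴴ * (U * A * Uᴴ)) = trace (Aᴴ * A) := by
    simp only [conjTranspose_mul, conjTranspose_conjTranspose, Matrix.mul_assoc]
    rw [← Matrix.mul_assoc Uᴴ U, hUU, Matrix.one_mul, trace_mul_comm, Matrix.mul_assoc,
      Matrix.mul_assoc, hUU, Matrix.mul_one]
  have hsum : ∑ i, ∑ j, ‖(U * A * Uᴴ) i j‖ ^ 2 = ∑ i, ∑ j, ‖A i j‖ ^ 2 := by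
    exact_mod_cast (sum_norm_sq_eq_trace _).trans (htrace.trans (sum_norm_sq_eq_trace A).symm)
  rw [frobNorm, frobNorm, hsum]

end Frobenius

theorem optcirc_properties (n : ℕ) (hn : 1 ≤ n)
    (ω : ℂ) (hω : ω = Complex.exp (2 * Real.pi * Complex.I / n))
    (F : Matrix (Fin n) (Fin n) ℂ)
    (hF : ∀ j k : Fin n, F j k = ω ^ ((j : ℕ) * (k : ℕ)) / (Real.sqrt n : ℂ))
    (M : Matrix (Fin n) (Fin n) ℂ)
    (D : Matrix (Fin n) (Fin n) ℂ)
    (hD : D = Matrix.diagonal (fun j => (F * M * Fᴴ) j j))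
    (CD : Matrix (Fin n) (Fin n) ℂ) (hCD : CD = Fᴴ * D * F) :
    (∀ i j i' j' : Fin n, i - j = i' - j' → CD i j = CD i' j') ∧
    (∀ j : Fin n, CD.mulVec (fun l => Fᴴ l j) =
      ((F * M * Fᴴ) j j) • (fun l => Fᴴ l j)) ∧
    (∀ C : Matrix (Fin n) (Fin n) ℂ,
      (∀ i j i' j' : Fin n, i - j = i' - j' → C i j = C i' j') →
        frobNorm (CD - M) ≤ frobNorm (C - M)) := by
  have : NeZero n := ⟨by omega⟩
  have hprim : IsPrimitiveRoot ω n := hω ▸ isPrimitiveRoot_exp n (NeZero.ne n)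
  obtain rfl : F = dftMatrix n ω := Matrix.ext hF
  have hU := dftMatrix_mem_unitaryGroup hprim
  have hFFH : dftMatrix n ω * (dftMatrix n ω)ᴴ = 1 := mem_unitaryGroup_iff.1 hU
  obtain ⟨v, hCD_circ⟩ : ∃ v, CD = circulant v := by
    rw [hCD, hD, conjTranspose_dftMatrix hprim]
    exact ⟨_, dftMatrix_inv_mul_diagonal_mul_dftMatrix hprim _⟩
  have hCD_eig : CD * (dftMatrix n ω)ᴴ = (dftMatrix n ω)ᴴ * D := by
    rw [hCD, Matrix.mul_assoc _ (dftMatrix n ω), hFFH, Matrix.mul_one]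
  have hCD_diag : dftMatrix n ω * CD * (dftMatrix n ω)ᴴ = D := by
    rw [Matrix.mul_assoc, hCD_eig, ← Matrix.mul_assoc, hFFH, Matrix.one_mul]
  refine ⟨fun i j i' j' h => by rw [hCD_circ, circulant_apply, circulant_apply, h],
    mulVec_col_eq_smul_of_mul_eq_mul_diagonal (by rwa [hD] at hCD_eig), fun C hC => ?_⟩
  set A := dftMatrix n ω * M * (dftMatrix n ω)ᴴ
  rw [eq_circulant_of_sub_eq hC]
  calc frobNorm (CD - M) = frobNorm (diagonal A.diag - A) := by
        rw [← frobNorm_mul_mul_conjTranspose hU, Matrix.mul_sub, Matrix.sub_mul, hCD_diag, hD]; rfl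
    _ ≤ frobNorm (diagonal _ - A) := frobNorm_diagonal_diag_sub_le A _
    _ = frobNorm (circulant (fun i => C i 0) - M) := by
        rw [← dftMatrix_mul_circulant_mul_conjTranspose hprim, ← Matrix.sub_mul,
          ← Matrix.mul_sub, frobNorm_mul_mul_conjTranspose hU]
end
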